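/- arXiv:1602.02556 — 2 statements merged into one kernel-verified Lean document; each statement's English description precedes it below -/
import Mathlib

section
/- Let Σ be a complete fan in N_ℝ with one-dimensional cone generators v_1, …, v_m and real numbers b_1, …, b_m defining a weakly normal structure, and let σ be a maximal cone with vertex u_σ ∈ N_ℝ* (the unique solution of ⟨v_i, u_σ⟩ + b_i = 0 for all generators v_i of σ). If Σ is normal (the structure satisfies: ⟨v_i, u_σ⟩ + b_i = 0 iff v_i ∈ σ), then it is weakly normal: the polytope {u : ⟨v_i, u⟩ + b_i ≥ 0 for all i} has full dimension dim N_ℝ*. -/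
open Matrix

/- STATEMENT 7: let Σ be a complete simplicial fan in ℝ^n with ray generators v_1,…,v_m,
maximal cones C (each spanned by n linearly independent rays, together covering ℝ^n),
numbers b_1,…,b_m, and for each maximal cone σ the vertex u_σ (the solution of
⟨v_i, u_σ⟩ + b_i = 0 over the generators v_i of σ).  If the data is normal
(⟨v_i, u_σ⟩ + b_i ≥ 0 for all i, σ, with equality iff i ∈ σ), then it is weakly normal:
the polytope {u : ⟨v_i, u⟩ + b_i ≥ 0 ∀ i} is full-dimensional (its affine span is all
of the dual space). -/
theorem stmt_7 (n m : ℕ) (v : Fin m → Fin n → ℝ) (b : Fin m → ℝ)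
    (C : Finset (Finset (Fin m))) (u : Finset (Fin m) → (Fin n → ℝ))
    (hsimp : ∀ σ ∈ C, σ.card = n ∧ LinearIndependent ℝ (fun i : σ => v i))
    (hcomplete : ∀ x : Fin n → ℝ, ∃ σ ∈ C, ∃ μ : Fin m → ℝ,
      (∀ i, 0 ≤ μ i) ∧ (∀ i ∉ σ, μ i = 0) ∧ x = ∑ i, μ i • v i)
    (hvertex : ∀ σ ∈ C, ∀ i ∈ σ, v i ⬝ᵥ u σ + b i = 0)
    (hnormal : ∀ σ ∈ C, ∀ i, 0 ≤ v i ⬝ᵥ u σ + b i ∧ (v i ⬝ᵥ u σ + b i = 0 ↔ i ∈ σ)) :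
    affineSpan ℝ {p : Fin n → ℝ | ∀ i, 0 ≤ v i ⬝ᵥ p + b i} = ⊤ := by
  classical
  obtain ⟨σ, hσC, -⟩ := hcomplete 0
  obtain ⟨hcard, hli⟩ := hsimp σ hσC
  -- the linear map w ↦ (i ↦ v i ⬝ᵥ w) is surjective
  set T : (Fin n → ℝ) →ₗ[ℝ] (σ → ℝ) :=
    { toFun := fun w i => v i ⬝ᵥ w
      map_add' := by intro x y; funext i; simp [dotProduct_add]
      map_smul' := by intro c x; funext i; simp [dotProduct_smul] }
  have hTinj : Function.Injective T := by
    rw [← LinearMap.ker_eq_bot, Submodule.eq_bot_iff]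
    intro w hw
    have hw0 : ∀ i : σ, v i ⬝ᵥ w = 0 := fun i => congrFun hw i
    -- v spans, since n linearly independent vectors in ℝ^n
    have hspan : Submodule.span ℝ (Set.range fun i : σ => v i) = ⊤ := by
      apply Submodule.eq_top_of_finrank_eq
      rw [finrank_span_eq_card hli]
      simp [hcard]
    have hall : ∀ x : Fin n → ℝ, x ⬝ᵥ w = 0 := by
      intro x
      have hx : x ∈ Submodule.span ℝ (Set.range fun i : σ => v i) := by
        rw [hspan]; trivial
      induction hx using Submodule.span_induction with
      | mem x hx => obtain ⟨i, rfl⟩ := hx; exact hw0 i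
      | zero => simp
      | add x y _ _ hx hy => simp [add_dotProduct, hx, hy]
      | smul c x _ hx => simp [smul_dotProduct, hx]
    have := hall w
    rwa [dotProduct_self_eq_zero] at this
  have hTsurj : Function.Surjective T := by
    have hdim : Module.finrank ℝ (Fin n → ℝ) = Module.finrank ℝ (σ → ℝ) := by
      simp [hcard]
    exact (LinearMap.injective_iff_surjective_of_finrank_eq_finrank hdim).mp hTinj
  obtain ⟨w, hw⟩ := hTsurj 1
  have hw1 : ∀ i ∈ σ, v i ⬝ᵥ w = 1 := fun i hi => congrFun hw ⟨i, hi⟩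
  -- find t > 0 such that all inequalities are strict at u σ + t • w
  have hev : ∀ᶠ t in nhdsWithin (0:ℝ) (Set.Ioi 0),
      ∀ i, 0 < v i ⬝ᵥ (u σ + t • w) + b i := by
    rw [Filter.eventually_all]
    intro i
    by_cases hi : i ∈ σ
    · filter_upwards [self_mem_nhdsWithin] with t ht
      have : v i ⬝ᵥ (u σ + t • w) + b i = (v i ⬝ᵥ u σ + b i) + t * (v i ⬝ᵥ w) := by
        simp [dotProduct_add, dotProduct_smul]; ring
      rw [this, hvertex σ hσC i hi, hw1 i hi]
      simpa using ht
    · have hpos : 0 < v i ⬝ᵥ u σ + b i := by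
        rcases (hnormal σ hσC i) with ⟨h0, heq⟩
        rcases lt_or_eq_of_le h0 with h | h
        · exact h
        · exact absurd (heq.mp h.symm) hi
      have hcont : Continuous fun t : ℝ => v i ⬝ᵥ (u σ + t • w) + b i := by
        have : ∀ t : ℝ, v i ⬝ᵥ (u σ + t • w) + b i
            = (v i ⬝ᵥ u σ + b i) + t * (v i ⬝ᵥ w) := by
          intro t; simp [dotProduct_add, dotProduct_smul]; ring
        simp only [this]; fun_prop
      have : ∀ᶠ t in nhds (0:ℝ), 0 < v i ⬝ᵥ (u σ + t • w) + b i := by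
        have := hcont.continuousAt (x := (0:ℝ))
        have h0 : v i ⬝ᵥ (u σ + (0:ℝ) • w) + b i = v i ⬝ᵥ u σ + b i := by simp
        exact continuousAt_const.eventually_lt this (by rw [h0]; exact hpos)
      exact this.filter_mono nhdsWithin_le_nhds
  obtain ⟨t, ht⟩ := hev.exists
  -- the open set of strict points
  have hopen : IsOpen {p : Fin n → ℝ | ∀ i, 0 < v i ⬝ᵥ p + b i} := by
    have : {p : Fin n → ℝ | ∀ i, 0 < v i ⬝ᵥ p + b i}
        = ⋂ i, {p | 0 < v i ⬝ᵥ p + b i} := by ext p; simp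
    rw [this]
    refine isOpen_iInter_of_finite fun i => ?_
    have hc : Continuous fun p : Fin n → ℝ => v i ⬝ᵥ p + b i := by
      unfold dotProduct; fun_prop
    exact isOpen_lt continuous_const hc
  have hne : {p : Fin n → ℝ | ∀ i, 0 < v i ⬝ᵥ p + b i}.Nonempty := ⟨_, ht⟩
  have hsub : {p : Fin n → ℝ | ∀ i, 0 < v i ⬝ᵥ p + b i}
      ⊆ {p : Fin n → ℝ | ∀ i, 0 ≤ v i ⬝ᵥ p + b i} := fun p hp i => (hp i).le
  exact top_unique ((hopen.affineSpan_eq_top hne) ▸ affineSpan_mono ℝ hsub)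
end

section
/- For the simplicial fan Σ_K = ⋃_{I ∈ K} cone(e_i : i ∈ I) in ℝ^m associated to a simplicial complex K on [m], the corresponding toric variety U(K) equals the complement of the coordinate subspace arrangement: U(K) = ℂ^m \ ⋃_{J ∉ K} {z : z_j = 0 for all j ∈ J}. -/
/- STATEMENT 18: for a simplicial complex K on [m], the toric variety U(K) of the fan
Σ_K = ⋃_{I ∈ K} cone(e_i : i ∈ I) — which is covered by the affine charts
U_{σ_I} = {z ∈ ℂ^m : z_j ≠ 0 for j ∉ I}, I ∈ K — equals the complement of the
coordinate subspace arrangement ⋃_{J ∉ K} {z : z_j = 0 ∀ j ∈ J}. -/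
theorem stmt_18 (m : ℕ) (K : Set (Set (Fin m))) (hK : ∀ s ∈ K, ∀ t ⊆ s, t ∈ K) :
    (⋃ I ∈ K, {z : Fin m → ℂ | ∀ j ∉ I, z j ≠ 0}) =
      Set.univ \ ⋃ J ∈ {J : Set (Fin m) | J ∉ K}, {z : Fin m → ℂ | ∀ j ∈ J, z j = 0} := by
  ext z
  simp only [Set.mem_iUnion, Set.mem_setOf_eq, Set.mem_diff, Set.mem_univ, true_and,
    not_exists]
  constructor
  · rintro ⟨I, hI, hz⟩ J hJ hzJ
    exact hJ (hK I hI J (fun j hj => by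
      by_contra h
      exact hz j h (hzJ j hj)))
  · intro h
    refine ⟨{j | z j = 0}, ?_, fun j hj => hj⟩
    by_contra hZ
    exact h _ hZ (fun j hj => hj)
end
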